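/- arXiv:0910.1272 — 2 statements merged into one kernel-verified Lean document; each statement's English description precedes it below -/
import Mathlib

section
/- Let N be a positive integer, let s be a positive integer, let f : ℝ → ℝ be a continuously differentiable function with f ≥ 0, and let a : ℝ → ℝ be a continuously differentiable function with a(t) > 0 for all t in an open interval I. Define ρ(t,x) = f((1/a(t)^s) · Σ_{i=1}^N x_i^s) / a(t)^N and u(t,x) = (a'(t)/a(t)) · x for t ∈ I and x ∈ ℝ^N. Then ρ and u satisfy the continuity equation ∂ρ/∂t (t,x) + Σ_{i=1}^N ∂/∂x_i (ρ(t,x) u_i(t,x)) = 0 for all t ∈ I and x ∈ ℝ^N. -/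
/-!
With `g = a⁻ˢ Σ xᵢˢ`, both `∂ₜρ` and `Σᵢ ∂ᵢ(ρ uᵢ)` equal `∓ (a'/a) a⁻ᴺ (N f(g) + s g f'(g))`: the
time derivative because `a` enters only through the scalings `a⁻ᴺ` and `a⁻ˢ`, the divergence
because `div x = N` and, by Euler's identity for the degree-`s` form `Σ xᵢˢ`, `Σᵢ xᵢ ∂ᵢ g = s g`.
-/

open Finset

theorem hasDerivAt_sum_update {ι : Type*} [Fintype ι] [DecidableEq ι] {φ : ℝ → ℝ} {φ' : ℝ}
    (x : ι → ℝ) (i : ι) (hφ : HasDerivAt φ φ' (x i)) :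
    HasDerivAt (fun y => ∑ j, φ (Function.update x i y j)) φ' (x i) := by
  have hsplit : ∀ y, ∑ j, φ (Function.update x i y j)
      = φ y + ∑ j ∈ univ \ {i}, φ (x j) := fun y => by
    simp_rw [Function.apply_update (fun _ => φ)]
    exact sum_update_of_mem (mem_univ i) _ _
  simpa only [hsplit] using hφ.add_const _

theorem HasDerivAt.one_div_pow {a : ℝ → ℝ} {a' t : ℝ} (ha : HasDerivAt a a' t) (hat : a t ≠ 0)
    (n : ℕ) : HasDerivAt (fun τ => 1 / a τ ^ n) (-(n * (a' / a t)) * (1 / a t ^ n)) t := by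
  simp only [one_div]
  refine ((ha.fun_pow n).fun_inv (pow_ne_zero n hat)).congr_deriv ?_
  rcases n with _ | n
  · simp
  · rw [Nat.add_sub_cancel]; field_simp; ring

theorem mul_natCast_mul_pow_sub_one (x : ℝ) (n : ℕ) : x * (n * x ^ (n - 1)) = n * x ^ n := by
  rcases n with _ | n
  · simp
  · rw [Nat.add_sub_cancel, pow_succ]; ring

theorem hasDerivAt_selfSimilar_density {f : ℝ → ℝ} {a : ℝ → ℝ} {a' t : ℝ} (s N : ℕ) (S : ℝ)
    (hf : DifferentiableAt ℝ f (1 / a t ^ s * S)) (ha : HasDerivAt a a' t) (hat : a t ≠ 0) :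
    HasDerivAt (fun τ => f (1 / a τ ^ s * S) / a τ ^ N)
      (-(a' / a t) * (s * (1 / a t ^ s * S) * deriv f (1 / a t ^ s * S)
        + N * f (1 / a t ^ s * S)) / a t ^ N) t := by
  simp only [div_eq_mul_one_div (f _)]
  refine ((hf.hasDerivAt.comp t ((ha.one_div_pow hat s).mul_const S)).fun_mul
    (ha.one_div_pow hat N)).congr_deriv ?_
  simp only [Function.comp_apply]
  ring

theorem hasDerivAt_selfSimilar_flux {ι : Type*} [Fintype ι] [DecidableEq ι] {f : ℝ → ℝ}
    (s : ℕ) (c d k : ℝ) (x : ι → ℝ) (i : ι)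
    (hf : DifferentiableAt ℝ f (c * ∑ j, x j ^ s)) :
    HasDerivAt (fun y => f (c * ∑ j, Function.update x i y j ^ s) / d * (k * y))
      (k * (f (c * ∑ j, x j ^ s) + s * deriv f (c * ∑ j, x j ^ s) * (c * x i ^ s)) / d) (x i) := by
  have hsum := hasDerivAt_sum_update (φ := fun y => y ^ s) x i (hasDerivAt_pow s (x i))
  rw [← Function.update_eq_self i x] at hf
  refine ((((hf.hasDerivAt.comp (x i) (hsum.const_mul c))).div_const d).fun_mul
    ((hasDerivAt_id (x i)).const_mul k)).congr_deriv ?_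
  simp only [Function.comp_apply, Function.update_eq_self, id]
  -- Euler's identity `xᵢ ∂ᵢ(xᵢˢ) = s xᵢˢ`
  linear_combination (k * c * deriv f (c * ∑ j, x j ^ s) / d) * mul_natCast_mul_pow_sub_one (x i) s

theorem continuity_equation_separation_general
    (N s : ℕ)
    (f : ℝ → ℝ) (hf : ContDiff ℝ 1 f)
    (a : ℝ → ℝ) (ha : ContDiff ℝ 1 a)
    (I : Set ℝ)
    (ha_pos : ∀ t ∈ I, 0 < a t)
    (ρ : ℝ → (Fin N → ℝ) → ℝ) (u : ℝ → (Fin N → ℝ) → Fin N → ℝ)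
    (hρ : ∀ t x, ρ t x = f ((1 / (a t) ^ s) * ∑ i, (x i) ^ s) / (a t) ^ N)
    (hu : ∀ t x i, u t x i = (deriv a t / a t) * x i) :
    ∀ t ∈ I, ∀ x : Fin N → ℝ,
      deriv (fun τ => ρ τ x) t
        + ∑ i, deriv (fun y => ρ t (Function.update x i y)
            * u t (Function.update x i y) i) (x i) = 0 := by
  intro t ht x
  have hat : a t ≠ 0 := (ha_pos t ht).ne'
  have hf' : Differentiable ℝ f := hf.differentiable one_ne_zero
  have ha' : HasDerivAt a (deriv a t) t := (ha.differentiable one_ne_zero t).hasDerivAt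
  simp only [hρ, hu, Function.update_self]
  rw [(hasDerivAt_selfSimilar_density s N _ (hf' _) ha' hat).deriv,
    sum_congr rfl fun i _ => (hasDerivAt_selfSimilar_flux s _ _ _ x i (hf' _)).deriv]
  simp only [← sum_div, ← mul_sum, sum_add_distrib, sum_const, card_univ, Fintype.card_fin,
    nsmul_eq_mul]
  ring

/-- The solution `ρ(t,x) = f((1/a(t)^s) Σ xᵢ^s)/a(t)^N`, `u(t,x) = (a'(t)/a(t)) x`
satisfies the continuity equation `ρ_t + Σᵢ ∂(ρ uᵢ)/∂xᵢ = 0`. -/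
theorem continuity_equation_separation
    (N s : ℕ) (hN : 0 < N) (hs : 0 < s)
    (f : ℝ → ℝ) (hf : ContDiff ℝ 1 f) (hf_nonneg : ∀ y, 0 ≤ f y)
    (a : ℝ → ℝ) (ha : ContDiff ℝ 1 a)
    (t₁ t₂ : ℝ) (I : Set ℝ) (hI : I = Set.Ioo t₁ t₂)
    (ha_pos : ∀ t ∈ I, 0 < a t)
    (ρ : ℝ → (Fin N → ℝ) → ℝ) (u : ℝ → (Fin N → ℝ) → Fin N → ℝ)
    (hρ : ∀ t x, ρ t x = f ((1 / (a t) ^ s) * ∑ i, (x i) ^ s) / (a t) ^ N)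
    (hu : ∀ t x i, u t x i = (deriv a t / a t) * x i) :
    ∀ t ∈ I, ∀ x : Fin N → ℝ,
      deriv (fun τ => ρ τ x) t
        + ∑ i, deriv (fun y => ρ t (Function.update x i y)
            * u t (Function.update x i y) i) (x i) = 0 :=
  continuity_equation_separation_general N s f hf a ha I ha_pos ρ u hρ hu
end

section
/- Let N be a positive integer, let s be a positive integer, let f : ℝ → ℝ be a continuously differentiable function with f ≥ 0, let a₁ > 0 and a₂ be real constants, set a(t) = a₁ + a₂ t, and let I be an open interval on which a(t) > 0. Define ρ(t,x) = f((1/a(t)^s) · Σ_{i=1}^N x_i^s) / a(t)^N and u(t,x) = (a'(t)/a(t)) · x on I × ℝ^N, and let μ > 0 be a constant. Then (ρ, u) is a solution of the pressureless Navier–Stokes equations: for all t ∈ I and x ∈ ℝ^N, both ∂ρ/∂t + Σ_{i=1}^N ∂(ρ u_i)/∂x_i = 0 and ρ(t,x) · (∂u/∂t (t,x) + (u(t,x)·∇)u(t,x)) = μ · ∇(∇·u)(t,x) hold. -/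
/-!
The velocity `u = (a'/a) x` generates the dilations `x ↦ (a(t)/a(t₀)) x`, and
`ρ(t,x) = a(t)^{-N} F(x/a(t))` is the push-forward of the profile `F` under them, so mass is
conserved for every differentiable profile; here `F(y) = f(Σ yᵢ^s)`. Concretely, the Euler identity
`Σ xᵢ ∂ᵢF = DF·x` makes the time derivative of `ρ` cancel the divergence of `ρu`.
For the momentum equation, `∇·u = N a'/a` does not depend on `x`, and `u_t + (u·∇)u = (b' + b²) x`
with `b = a'/a`, which vanishes because `a` is affine.
-/

open Finset Function

section

variable {ι : Type*} [Fintype ι] [DecidableEq ι]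

def ContinuityEqAt (ρ : ℝ → (ι → ℝ) → ℝ) (u : ℝ → (ι → ℝ) → ι → ℝ) (t : ℝ) (x : ι → ℝ) :
    Prop :=
  deriv (fun τ => ρ τ x) t + ∑ i, deriv (fun y => ρ t (update x i y) * u t (update x i y) i) (x i)
    = 0

def MomentumEqAt (μ : ℝ) (ρ : ℝ → (ι → ℝ) → ℝ) (u : ℝ → (ι → ℝ) → ι → ℝ) (t : ℝ)
    (x : ι → ℝ) : Prop :=
  ∀ i, ρ t x * (deriv (fun τ => u τ x i) t
      + ∑ j, u t x j * deriv (fun y => u t (update x j y) i) (x j))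
    = μ * deriv (fun y => ∑ j, deriv (fun z => u t (update (update x i y) j z) j)
        (update x i y j)) (x i)

noncomputable def selfSimilarDensity (F : (ι → ℝ) → ℝ) (a : ℝ → ℝ) (t : ℝ) (x : ι → ℝ) : ℝ :=
  F ((a t)⁻¹ • x) / a t ^ Fintype.card ι

def radialVelocity (b : ℝ → ℝ) (t : ℝ) (x : ι → ℝ) (i : ι) : ℝ :=
  b t * x i

theorem LinearMap.sum_smul_apply_single {R M : Type*} [Semiring R] [AddCommMonoid M]
    [Module R M] (L : (ι → R) →ₗ[R] M) (x : ι → R) :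
    ∑ i, x i • L (Pi.single i 1) = L x := by
  conv_rhs => rw [pi_eq_sum_univ' x, map_sum]
  simp only [map_smul]

theorem hasDerivAt_selfSimilarDensity_mul_radialVelocity {F : (ι → ℝ) → ℝ}
    {L : (ι → ℝ) →L[ℝ] ℝ} {a : ℝ → ℝ} {t : ℝ} {x : ι → ℝ} (hF : HasFDerivAt F L ((a t)⁻¹ • x))
    (i : ι) :
    HasDerivAt (fun y => selfSimilarDensity F a t (update x i y)
        * radialVelocity (deriv a / a) t (update x i y) i)
      (L ((a t)⁻¹ • Pi.single i 1) / a t ^ Fintype.card ι * (deriv a t / a t * x i)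
        + F ((a t)⁻¹ • x) / a t ^ Fintype.card ι * (deriv a t / a t)) (x i) := by
  rw [← update_eq_self i x] at hF
  have hdens : HasDerivAt (fun y => F ((a t)⁻¹ • update x i y))
      (L ((a t)⁻¹ • Pi.single i 1)) (x i) :=
    hF.comp_hasDerivAt (x i) ((hasDerivAt_update x i (x i)).const_smul (a t)⁻¹)
  have hvel : HasDerivAt (fun y => radialVelocity (deriv a / a) t (update x i y) i)
      (deriv a t / a t) (x i) := by
    simpa [radialVelocity] using (hasDerivAt_id' (x i)).const_mul (deriv a t / a t)
  have h_flux := (hdens.div_const (a t ^ Fintype.card ι)).mul hvel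
  rwa [update_eq_self] at h_flux

theorem continuityEqAt_selfSimilarDensity {F : (ι → ℝ) → ℝ} {a : ℝ → ℝ} {t : ℝ}
    (ha : DifferentiableAt ℝ a t) (hat : a t ≠ 0) (x : ι → ℝ)
    (hF : DifferentiableAt ℝ F ((a t)⁻¹ • x)) :
    ContinuityEqAt (selfSimilarDensity F a) (radialVelocity (deriv a / a)) t x := by
  set n := Fintype.card ι with hn
  set L := fderiv ℝ F ((a t)⁻¹ • x)
  have hL : HasFDerivAt F L ((a t)⁻¹ • x) := hF.hasFDerivAt
  have hpow : a t ^ n ≠ 0 := pow_ne_zero n hat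
  have h_time : HasDerivAt (fun τ => selfSimilarDensity F a τ x)
      ((L ((-deriv a t / a t ^ 2) • x) * a t ^ n
        - F ((a t)⁻¹ • x) * (n * a t ^ (n - 1) * deriv a t)) / (a t ^ n) ^ 2) t :=
    (hL.comp_hasDerivAt t ((ha.hasDerivAt.inv hat).smul_const x)).div
      (ha.hasDerivAt.pow n) hpow
  unfold ContinuityEqAt
  simp only [h_time.deriv, fun i => (hasDerivAt_selfSimilarDensity_mul_radialVelocity hL i).deriv,
    map_smul, smul_eq_mul]
  rw [← hn, sum_add_distrib]
  have h_euler : ∑ i, (a t)⁻¹ * L (Pi.single i 1) / a t ^ n * (deriv a t / a t * x i)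
      = deriv a t / (a t ^ 2 * a t ^ n) * L x := by
    have h_sum := (L : (ι → ℝ) →ₗ[ℝ] ℝ).sum_smul_apply_single x
    simp only [ContinuousLinearMap.coe_coe, smul_eq_mul] at h_sum
    rw [← h_sum, mul_sum]
    refine sum_congr rfl fun i _ => ?_
    field_simp
  have h_pred : (n : ℝ) * a t ^ (n - 1) * a t = n * a t ^ n := by
    rcases Nat.eq_zero_or_pos n with hn0 | hn0
    · simp [hn0]
    · rw [mul_assoc, pow_sub_one_mul hn0.ne']
  rw [h_euler, sum_const, card_univ, nsmul_eq_mul]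
  generalize F ((a t)⁻¹ • x) = F₀
  field_simp
  linear_combination (-(deriv a t * a t * F₀)) * h_pred

theorem momentumEqAt_radialVelocity {b : ℝ → ℝ} {t : ℝ} (hb : HasDerivAt b (-b t ^ 2) t)
    (μ : ℝ) (ρ : ℝ → (ι → ℝ) → ℝ) (x : ι → ℝ) : MomentumEqAt μ ρ (radialVelocity b) t x := by
  intro i
  have h_time : deriv (fun τ => radialVelocity b τ x i) t = -b t ^ 2 * x i :=
    (hb.mul_const (x i)).deriv
  have h_grad (w : ι → ℝ) (j k : ι) (p : ℝ) :
      deriv (fun y => radialVelocity b t (update w j y) k) p = b t * (Pi.single j 1 : ι → ℝ) k :=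
    ((hasDerivAt_pi.1 (hasDerivAt_update w j p) k).const_mul (b t)).deriv
  have h_transport : ∑ j, radialVelocity b t x j
      * deriv (fun y => radialVelocity b t (update x j y) i) (x j) = b t ^ 2 * x i := by
    simp only [h_grad]
    simp only [radialVelocity, Pi.single_apply, mul_ite, mul_one, mul_zero, sum_ite_eq, mem_univ,
      if_true]
    ring
  have h_div (y : ℝ) : ∑ j, deriv (fun z => radialVelocity b t (update (update x i y) j z) j)
      (update x i y j) = Fintype.card ι * b t := by
    simp [h_grad]
  rw [h_time, h_transport, funext h_div, deriv_const]
  ring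

theorem hasDerivAt_deriv_div_self_of_hasDerivAt_const {a : ℝ → ℝ} {c t : ℝ}
    (ha : ∀ τ, HasDerivAt a c τ) (hat : a t ≠ 0) :
    HasDerivAt (deriv a / a) (-(deriv a / a) t ^ 2) t := by
  have h_rate : deriv a / a = (fun _ => c) / a := funext fun τ => by simp [(ha τ).deriv]
  rw [h_rate]
  refine ((hasDerivAt_const t c).div (ha t) hat).congr_deriv ?_
  simp only [Pi.div_apply]
  ring

end

theorem pressureless_navier_stokes_exact_solution_general
    (N s : ℕ)
    (f : ℝ → ℝ) (hf : ContDiff ℝ 1 f)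
    (a₁ a₂ : ℝ)
    (a : ℝ → ℝ) (ha : ∀ t, a t = a₁ + a₂ * t)
    (I : Set ℝ)
    (ha_pos : ∀ t ∈ I, 0 < a t)
    (μ : ℝ)
    (ρ : ℝ → (Fin N → ℝ) → ℝ) (u : ℝ → (Fin N → ℝ) → Fin N → ℝ)
    (hρ : ∀ t x, ρ t x = f ((1 / (a t) ^ s) * ∑ i, (x i) ^ s) / (a t) ^ N)
    (hu : ∀ t x i, u t x i = (deriv a t / a t) * x i) :
    ∀ t ∈ I, ∀ x : Fin N → ℝ,
      (deriv (fun τ => ρ τ x) t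
        + ∑ i, deriv (fun y => ρ t (Function.update x i y)
            * u t (Function.update x i y) i) (x i) = 0)
      ∧ (∀ i : Fin N,
          ρ t x * (deriv (fun τ => u τ x i) t
            + ∑ j, u t x j * deriv (fun y => u t (Function.update x j y) i) (x j))
          = μ * deriv (fun y => ∑ j, deriv
              (fun z => u t (Function.update (Function.update x i y) j z) j)
              (Function.update x i y j)) (x i)) := by
  have ha_deriv (τ : ℝ) : HasDerivAt a a₂ τ := by
    rw [funext ha]
    simpa using ((hasDerivAt_id τ).const_mul a₂).const_add a₁
  have hρ_eq : ρ = selfSimilarDensity (fun y => f (∑ i, y i ^ s)) a := by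
    funext τ x
    simp only [hρ, selfSimilarDensity, Fintype.card_fin, Pi.smul_apply, smul_eq_mul, mul_pow,
      inv_pow, ← mul_sum, one_div]
  have hu_eq : u = radialVelocity (deriv a / a) := funext₃ hu
  subst hρ_eq hu_eq
  intro t ht x
  have hat : a t ≠ 0 := (ha_pos t ht).ne'
  have hF : Differentiable ℝ fun y : Fin N → ℝ => f (∑ i, y i ^ s) :=
    (hf.differentiable one_ne_zero).comp (by fun_prop)
  exact ⟨continuityEqAt_selfSimilarDensity (ha_deriv t).differentiableAt hat x (hF _),
    momentumEqAt_radialVelocity (hasDerivAt_deriv_div_self_of_hasDerivAt_const ha_deriv hat) μ _ x⟩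

/-- With `a(t) = a₁ + a₂ t`, the pair `ρ(t,x) = f((1/a(t)^s) Σ xᵢ^s)/a(t)^N`,
`u(t,x) = (a'(t)/a(t)) x` solves the pressureless Navier–Stokes equations
`ρ_t + ∇·(ρ u) = 0`, `ρ (u_t + (u·∇)u) = μ ∇(∇·u)`. -/
theorem pressureless_navier_stokes_exact_solution
    (N s : ℕ) (hN : 0 < N) (hs : 0 < s)
    (f : ℝ → ℝ) (hf : ContDiff ℝ 1 f) (hf_nonneg : ∀ y, 0 ≤ f y)
    (a₁ a₂ : ℝ) (ha₁ : 0 < a₁)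
    (a : ℝ → ℝ) (ha : ∀ t, a t = a₁ + a₂ * t)
    (t₁ t₂ : ℝ) (I : Set ℝ) (hI : I = Set.Ioo t₁ t₂)
    (ha_pos : ∀ t ∈ I, 0 < a t)
    (μ : ℝ) (hμ : 0 < μ)
    (ρ : ℝ → (Fin N → ℝ) → ℝ) (u : ℝ → (Fin N → ℝ) → Fin N → ℝ)
    (hρ : ∀ t x, ρ t x = f ((1 / (a t) ^ s) * ∑ i, (x i) ^ s) / (a t) ^ N)
    (hu : ∀ t x i, u t x i = (deriv a t / a t) * x i) :
    ∀ t ∈ I, ∀ x : Fin N → ℝ,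
      (deriv (fun τ => ρ τ x) t
        + ∑ i, deriv (fun y => ρ t (Function.update x i y)
            * u t (Function.update x i y) i) (x i) = 0)
      ∧ (∀ i : Fin N,
          ρ t x * (deriv (fun τ => u τ x i) t
            + ∑ j, u t x j * deriv (fun y => u t (Function.update x j y) i) (x j))
          = μ * deriv (fun y => ∑ j, deriv
              (fun z => u t (Function.update (Function.update x i y) j z) j)
              (Function.update x i y j)) (x i)) :=
  pressureless_navier_stokes_exact_solution_general N s f hf a₁ a₂ a ha I ha_pos μ ρ u hρ hu
end
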